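/- arXiv:1601.02311 — 2 statements merged into one kernel-verified Lean document; each statement's English description precedes it below -/
import Mathlib

section
/- Let n and k be positive integers with k ≤ n, and let A_k ∈ ℝ[x_1,…,x_n] be the polynomial A_k(x) = |x|·(|x|−1)···(|x|−k+1), where |x| = x_1+⋯+x_n. Then there exist polynomials g_1,…,g_n ∈ ℝ[x_1,…,x_n], each of degree at most k−1, such that A_k(x) = Σ_{i=1}^n (x_i² − x_i)·g_i(x) + k!·e_k(x_1, x_2, …, x_n) as an identity of polynomials, where e_k is the k-th elementary symmetric polynomial. -/
/-!
Splitting off the variable `x_i` gives Pascal's rule `e_t = ∂ᵢ e_{t+1} + x_i ∂ᵢ e_t`.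
Multiplying by `x_i`, summing over `i`, and applying Euler's identity `∑ x_i ∂ᵢ e_t = t e_t`
to the homogeneous `e_t` and `e_{t+1}` yields
`(|x| - t) e_t = ∑ (x_i² - x_i) ∂ᵢ e_t + (t + 1) e_{t+1}`,
with multipliers `∂ᵢ e_t` of degree `t - 1`. Starting from `A_1 = e_1` and multiplying by
`|x| - t` one factor at a time gives `A_k ≡ k! e_k` modulo the `x_i² - x_i`.
-/

open MvPolynomial Finset

namespace MvPolynomial

variable {σ R : Type*}

section CommSemiring

variable [CommSemiring R]

noncomputable def esymmOn (s : Finset σ) (t : ℕ) : MvPolynomial σ R :=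
  ∑ u ∈ powersetCard t s, ∏ j ∈ u, X j

lemma esymmOn_insert [DecidableEq σ] {i : σ} {s : Finset σ} (hi : i ∉ s) (t : ℕ) :
    (esymmOn (insert i s) (t + 1) : MvPolynomial σ R) =
      esymmOn s (t + 1) + X i * esymmOn s t := by
  have hdisj : Disjoint (powersetCard (t + 1) s) ((powersetCard t s).image (insert i)) := by
    refine disjoint_right.mpr fun v hv hv' => hi ?_
    obtain ⟨u, -, rfl⟩ := mem_image.mp hv
    exact (mem_powersetCard.mp hv').1 (mem_insert_self i u)
  have hnot : ∀ u ∈ powersetCard t s, i ∉ u := fun u hu h => hi ((mem_powersetCard.mp hu).1 h)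
  rw [esymmOn, powersetCard_succ_insert hi, sum_union hdisj, sum_image, esymmOn, esymmOn, mul_sum]
  · exact congrArg _ (sum_congr rfl fun u hu => prod_insert (hnot u hu))
  · exact fun u hu v hv huv => by
      rw [← erase_insert (hnot u hu), ← erase_insert (hnot v hv), huv]

lemma pderiv_prod_X_of_notMem {i : σ} {u : Finset σ} (hi : i ∉ u) :
    pderiv i (∏ j ∈ u, X j : MvPolynomial σ R) = 0 :=
  prod_induction _ (fun q => pderiv i q = 0) (fun a b ha hb => by simp [ha, hb])
    pderiv_one fun j hj => pderiv_X_of_ne fun h => hi (h ▸ hj)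

lemma pderiv_esymmOn_of_notMem {i : σ} {s : Finset σ} (hi : i ∉ s) (t : ℕ) :
    pderiv i (esymmOn s t : MvPolynomial σ R) = 0 := by
  rw [esymmOn, map_sum]
  exact sum_eq_zero fun u hu => pderiv_prod_X_of_notMem fun h => hi ((mem_powersetCard.mp hu).1 h)

variable [Fintype σ]

lemma isHomogeneous_esymm (t : ℕ) : (esymm σ R t).IsHomogeneous t :=
  IsHomogeneous.sum _ _ _ fun u hu => by
    simpa [mem_powersetCard_univ.mp hu] using
      IsHomogeneous.prod u _ (fun _ => 1) fun j _ => isHomogeneous_X R j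

variable [DecidableEq σ]

lemma esymm_succ_eq_esymmOn_erase (i : σ) (t : ℕ) :
    esymm σ R (t + 1) = esymmOn (univ.erase i) (t + 1) + X i * esymmOn (univ.erase i) t := by
  rw [← esymmOn_insert (notMem_erase i univ), insert_erase (mem_univ i)]
  rfl

lemma pderiv_esymm_succ (i : σ) (t : ℕ) :
    pderiv i (esymm σ R (t + 1)) = esymmOn (univ.erase i) t := by
  simp [esymm_succ_eq_esymmOn_erase i, pderiv_esymmOn_of_notMem (notMem_erase i univ)]

lemma esymm_eq_pderiv_add_X_mul_pderiv (i : σ) (t : ℕ) :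
    esymm σ R t = pderiv i (esymm σ R (t + 1)) + X i * pderiv i (esymm σ R t) := by
  cases t with
  | zero => simp [esymm_zero]
  | succ t => rw [pderiv_esymm_succ, pderiv_esymm_succ, esymm_succ_eq_esymmOn_erase i]

end CommSemiring

section CommRing

variable [CommRing R] [Fintype σ]

lemma sum_X_sub_mul_esymm (t : ℕ) :
    ((∑ i, X i) - C (t : R)) * esymm σ R t
      = ∑ i, (X i ^ 2 - X i) * pderiv i (esymm σ R t)
        + C ((t + 1 : ℕ) : R) * esymm σ R (t + 1) := by
  classical
  have hsplit : (∑ i, X i) * esymm σ R t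
      = ∑ i, X i * pderiv i (esymm σ R (t + 1)) + ∑ i, X i ^ 2 * pderiv i (esymm σ R t) := by
    rw [sum_mul, ← sum_add_distrib]
    refine sum_congr rfl fun i _ => ?_
    conv_lhs => rw [esymm_eq_pderiv_add_X_mul_pderiv i t]
    ring
  have heuler := fun t => (isHomogeneous_esymm (σ := σ) (R := R) t).sum_X_mul_pderiv
  simp only [sub_mul, sum_sub_distrib, hsplit, heuler, nsmul_eq_mul, ← map_natCast C]
  ring

lemma totalDegree_sum_X_sub_C_le (r : R) :
    ((∑ i, X i : MvPolynomial σ R) - C r).totalDegree ≤ 1 :=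
  (totalDegree_sub_C_le _ r).trans (esymm_one σ R ▸ (isHomogeneous_esymm 1).totalDegree_le)

theorem exists_prod_sub_eq_sum_mul_add_factorial_mul_esymm (k : ℕ) :
    ∃ g : σ → MvPolynomial σ R, (∀ i, (g i).totalDegree ≤ k) ∧
      ∏ j ∈ range (k + 1), ((∑ i, X i) - C (j : R))
        = ∑ i, (X i ^ 2 - X i) * g i + C ((k + 1).factorial : R) * esymm σ R (k + 1) := by
  induction k with
  | zero => exact ⟨0, by simp, by simp [esymm_one]⟩
  | succ k ih =>
    obtain ⟨g, hg, hA⟩ := ih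
    set s : MvPolynomial σ R := ∑ i, X i
    set c : MvPolynomial σ R := C ((k + 1).factorial : R)
    refine ⟨fun i => g i * (s - C ((k + 1 : ℕ) : R)) + c * pderiv i (esymm σ R (k + 1)),
      fun i => ?_, ?_⟩
    · refine (totalDegree_add _ _).trans (max_le ?_ ?_)
      · exact (totalDegree_mul _ _).trans (add_le_add (hg i) (totalDegree_sum_X_sub_C_le _))
      · refine (totalDegree_mul _ _).trans ?_
        rw [totalDegree_C, zero_add]
        exact (isHomogeneous_esymm _).pderiv.totalDegree_le.trans (by omega)
    · have hsum : ∑ i, (X i ^ 2 - X i) *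
            (g i * (s - C ((k + 1 : ℕ) : R)) + c * pderiv i (esymm σ R (k + 1)))
          = (∑ i, (X i ^ 2 - X i) * g i) * (s - C ((k + 1 : ℕ) : R))
            + c * ∑ i, (X i ^ 2 - X i) * pderiv i (esymm σ R (k + 1)) := by
        rw [sum_mul, mul_sum, ← sum_add_distrib]
        exact sum_congr rfl fun i _ => by ring
      rw [prod_range_succ, hA, hsum, Nat.factorial_succ (k + 1), Nat.cast_mul, map_mul]
      linear_combination c * sum_X_sub_mul_esymm (σ := σ) (R := R) (k + 1)

end CommRing

end MvPolynomial

theorem Ak_eq_esymm_mod_ideal_general (n k : ℕ) :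
    ∃ g : Fin n → MvPolynomial (Fin n) ℝ,
      (∀ i, (g i).totalDegree ≤ k - 1) ∧
      (∏ j ∈ Finset.range k, ((∑ i, X i) - C (j : ℝ)))
        = (∑ i, (X i ^ 2 - X i) * g i)
          + C (k.factorial : ℝ) *
              ∑ S ∈ Finset.powersetCard k (Finset.univ : Finset (Fin n)),
                ∏ i ∈ S, X i := by
  cases k with
  | zero => exact ⟨0, by simp, by simp⟩
  | succ k => exact exists_prod_sub_eq_sum_mul_add_factorial_mul_esymm k

/-- `A_k(x) = |x|(|x|-1)⋯(|x|-k+1)` equals `k!·e_k(x_1,…,x_n)` modulo the ideal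
`⟨x_i² - x_i⟩`, with multipliers of degree at most `k-1`. -/
theorem Ak_eq_esymm_mod_ideal (n k : ℕ) (hk1 : 1 ≤ k) (hk2 : k ≤ n) :
    ∃ g : Fin n → MvPolynomial (Fin n) ℝ,
      (∀ i, (g i).totalDegree ≤ k - 1) ∧
      (∏ j ∈ Finset.range k, ((∑ i, X i) - C (j : ℝ)))
        = (∑ i, (X i ^ 2 - X i) * g i)
          + C (k.factorial : ℝ) *
              ∑ S ∈ Finset.powersetCard k (Finset.univ : Finset (Fin n)),
                ∏ i ∈ S, X i :=
  Ak_eq_esymm_mod_ideal_general n k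
end

section
/- Let n and t be integers with 1 ≤ t ≤ n/2. Let p = Σ_{|S|=t} p_S x^S and q = Σ_{|S|=t} q_S x^S be homogeneous multilinear polynomials of degree t in x_1,…,x_n, both satisfying Σ_{i=1}^n ∂p/∂x_i = 0 and Σ_{i=1}^n ∂q/∂x_i = 0. Let ⟨p, q⟩ = Σ_{S ⊆ {1,…,n}, |S|=t} p_S q_S. Then for every x ∈ {0,1}^n: (1/n!)·Σ_{σ ∈ S_n} p(σx)·q(σx) = ⟨p,q⟩·((n−2t)!/n!)·Π_{i=0}^{t−1} (|x| − i)(n − |x| − i), where (σx)_i = x_{σ(i)}. -/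
open MvPolynomial

/-- The space `L_t` of homogeneous multilinear degree-`t` polynomials in `n`
variables, i.e. the span of the monomials `x^S = Π_{i∈S} x_i` with `|S| = t`. -/
noncomputable def homogML (n t : ℕ) : Submodule ℝ (MvPolynomial (Fin n) ℝ) :=
  Submodule.span ℝ
    {p | ∃ S : Finset (Fin n), S.card = t ∧ p = ∏ i ∈ S, X i}

/-- The operator `W p = Σ_i ∂p/∂x_i`. -/
noncomputable def Wop (n : ℕ) :
    MvPolynomial (Fin n) ℝ →ₗ[ℝ] MvPolynomial (Fin n) ℝ :=
  ∑ i : Fin n, (pderiv i).toLinearMap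

/-!
Expanding `p(σx) q(σx)` in monomials reduces the average over `σ` to averages of `x^(S ∪ T)`,
since `x` is 0/1-valued. For such `x` the sum over `σ` of `x^U ∘ σ` depends only on `m = |U|`
and equals `(n - m)! · |x|(|x| - 1)⋯(|x| - m + 1)`; here `|S ∪ T| = t + |S \ T|`.
For fixed `T`, the condition `W p = 0` says that summing the coefficients `p_S` over the `t`-sets
`S` with `|S \ T| = r` gives `(-1)^r C(t, r) p_T`, which collapses the double sum to `⟨p, q⟩`
times an alternating sum; a Vandermonde-type identity evaluates the latter to
`(n - 2t)! (|x|)_t (n - |x|)_t`.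
-/

open Finset

section IndicatorExp

variable {σ : Type*}

noncomputable def indicatorExp (S : Finset σ) : σ →₀ ℕ := ∑ i ∈ S, Finsupp.single i 1

lemma monomial_indicatorExp {R : Type*} [CommSemiring R] (S : Finset σ) :
    monomial (indicatorExp S) (1 : R) = ∏ i ∈ S, X i := by
  rw [indicatorExp, monomial_sum_one]
  rfl

variable [DecidableEq σ]

lemma indicatorExp_apply (S : Finset σ) (i : σ) :
    indicatorExp S i = if i ∈ S then 1 else 0 := by
  simp [indicatorExp, Finsupp.finsetSum_apply, Finsupp.single_apply]

lemma indicatorExp_injective : Function.Injective (indicatorExp (σ := σ)) := by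
  intro S T h
  ext i
  have hi := congr($h i)
  simp only [indicatorExp_apply] at hi
  split_ifs at hi <;> simp_all

lemma indicatorExp_insert {S : Finset σ} {a : σ} (ha : a ∉ S) :
    indicatorExp (insert a S) = indicatorExp S + Finsupp.single a 1 := by
  rw [indicatorExp, sum_insert ha, add_comm, indicatorExp]

end IndicatorExp

section HomogML

variable {n t : ℕ} {p : MvPolynomial (Fin n) ℝ}

lemma eq_sum_coeff_smul_of_mem_homogML (hp : p ∈ homogML n t) :
    p = ∑ S ∈ powersetCard t univ, coeff (indicatorExp S) p • ∏ i ∈ S, X i := by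
  let expand : MvPolynomial (Fin n) ℝ →ₗ[ℝ] MvPolynomial (Fin n) ℝ :=
    ∑ S ∈ powersetCard t univ, (lcoeff ℝ (indicatorExp S)).smulRight (∏ i ∈ S, X i)
  suffices homogML n t ≤ LinearMap.eqLocus LinearMap.id expand by
    simpa [expand] using this hp
  refine Submodule.span_le.mpr ?_
  rintro _ ⟨T, hT, rfl⟩
  simp only [SetLike.mem_coe, LinearMap.mem_eqLocus, expand, LinearMap.coe_sum, Finset.sum_apply,
    LinearMap.smulRight_apply, lcoeff_apply, ← monomial_indicatorExp, coeff_monomial,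
    indicatorExp_injective.eq_iff, LinearMap.id_apply]
  simp [ite_smul, mem_powersetCard, hT]

lemma eval_eq_sum_of_mem_homogML (hp : p ∈ homogML n t) (y : Fin n → ℝ) :
    eval y p = ∑ S ∈ powersetCard t univ, coeff (indicatorExp S) p * ∏ i ∈ S, y i := by
  conv_lhs => rw [eq_sum_coeff_smul_of_mem_homogML hp]
  simp [map_sum]

lemma coeff_eq_zero_of_mem_homogML (hp : p ∈ homogML n t) {m : Fin n →₀ ℕ} {i : Fin n}
    (hm : 1 < m i) : coeff m p = 0 := by
  rw [eq_sum_coeff_smul_of_mem_homogML hp, coeff_sum]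
  refine sum_eq_zero fun S _ => ?_
  rw [coeff_smul, ← monomial_indicatorExp, coeff_monomial, if_neg, smul_zero]
  rintro rfl
  rw [indicatorExp_apply] at hm
  split_ifs at hm <;> omega

lemma sum_compl_coeff_insert_eq_zero (hp : p ∈ homogML n t) (hW : Wop n p = 0)
    (R : Finset (Fin n)) : ∑ i ∈ Rᶜ, coeff (indicatorExp (insert i R)) p = 0 := by
  have hcoeff := congr(coeff (indicatorExp R) $hW)
  simp only [Wop, LinearMap.coe_sum, Finset.sum_apply, Derivation.coeFn_coe, coeff_sum,
    coeff_pderiv, coeff_zero] at hcoeff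
  rw [← sum_add_sum_compl R] at hcoeff
  have h_in : ∀ i ∈ R,
      coeff (indicatorExp R + Finsupp.single i 1) p * ((indicatorExp R i : ℕ) + 1 : ℝ) = 0 := by
    intro i hi
    rw [coeff_eq_zero_of_mem_homogML hp (i := i), zero_mul]
    simp [indicatorExp_apply, hi]
  have h_out : ∀ i ∈ Rᶜ,
      coeff (indicatorExp R + Finsupp.single i 1) p * ((indicatorExp R i : ℕ) + 1 : ℝ)
        = coeff (indicatorExp (insert i R)) p := by
    intro i hi
    rw [mem_compl] at hi
    simp [indicatorExp_insert hi, indicatorExp_apply, hi]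
  rwa [sum_eq_zero h_in, zero_add, sum_congr rfl h_out] at hcoeff

end HomogML

section Shells

variable {α : Type*} [DecidableEq α]

lemma card_filter_card_erase_sdiff {S : Finset α} (U : Finset α) {t : ℕ} (hS : #S = t) (r : ℕ) :
    #{a ∈ S | #(S.erase a \ U) = r}
      = (if #(S \ U) = r then t - r else 0) + (if #(S \ U) = r + 1 then r + 1 else 0) := by
  have h_inter : ∀ a ∈ S ∩ U, S.erase a \ U = S \ U := fun a ha => by
    rw [erase_sdiff_comm, erase_eq_of_notMem fun h => (mem_sdiff.1 h).2 (mem_inter.1 ha).2]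
  have h_sdiff : ∀ a ∈ S \ U, #(S.erase a \ U) = #(S \ U) - 1 := fun a ha => by
    rw [erase_sdiff_comm, card_erase_of_mem ha]
  have h_card := card_sdiff_add_card_inter S U
  rw [card_filter, ← sum_inter_add_sum_sdiff S U,
    sum_congr rfl fun a ha => by rw [h_inter a ha], sum_const,
    sum_congr rfl fun a (ha : a ∈ S \ U) => by rw [h_sdiff a ha], sum_const, smul_eq_mul,
    smul_eq_mul]
  split_ifs <;> omega

variable [Fintype α]

lemma sum_powersetCard_sum_compl_insert {M : Type*} [AddCommMonoid M] (k : ℕ)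
    (g : Finset α → α → M) :
    ∑ R ∈ powersetCard k univ, ∑ a ∈ Rᶜ, g (insert a R) a
      = ∑ S ∈ powersetCard (k + 1) univ, ∑ a ∈ S, g S a := by
  rw [sum_sigma', sum_sigma']
  refine sum_nbij' (fun x => ⟨insert x.2 x.1, x.2⟩) (fun y => ⟨y.1.erase y.2, y.2⟩)
    ?_ ?_ ?_ ?_ (fun _ _ => rfl)
  · rintro ⟨R, a⟩ h
    simp only [mem_sigma, mem_powersetCard_univ, mem_compl] at h ⊢
    simp [card_insert_of_notMem h.2, h.1]
  · rintro ⟨S, a⟩ h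
    simp only [mem_sigma, mem_powersetCard_univ, mem_compl] at h ⊢
    simp [card_erase_of_mem h.2, h.1]
  · rintro ⟨R, a⟩ h
    simp only [mem_sigma, mem_compl] at h
    simp [erase_insert h.2]
  · rintro ⟨S, a⟩ h
    simp only [mem_sigma] at h
    simp [insert_erase h.2]

variable {A : Type*} [CommRing A]

noncomputable def shellSum (c : Finset α → A) (U : Finset α) (t r : ℕ) : A :=
  ∑ S ∈ powersetCard t (univ : Finset α) with #(S \ U) = r, c S

variable {c : Finset α → A} {U : Finset α} {t : ℕ}

lemma shellSum_zero (hU : #U = t) : shellSum c U t 0 = c U := by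
  have : {S ∈ powersetCard t (univ : Finset α) | #(S \ U) = 0} = {U} := by
    ext S
    simp only [mem_filter, mem_powersetCard_univ, card_eq_zero, sdiff_eq_empty_iff_subset,
      mem_singleton]
    exact ⟨fun h => eq_of_subset_of_card_le h.2 (by omega), fun h => by simp [h, hU]⟩
  rw [shellSum, this, sum_singleton]

-- Sum the vanishing of `∑ a ∉ R, c (insert a R)` over the `(t - 1)`-sets `R` with
-- `#(R \ U) = r` and count how often each `t`-set arises (`card_filter_card_erase_sdiff`).
lemma shellSum_recurrence (hc : ∀ R, ∑ a ∈ Rᶜ, c (insert a R) = 0) (hU : #U = t) (r : ℕ) :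
    ((t - r : ℕ) : A) * shellSum c U t r + (r + 1) * shellSum c U t (r + 1) = 0 := by
  obtain _ | k := t
  · simp [shellSum, filter_singleton]
  let g : Finset α → α → A := fun S a => if #(S.erase a \ U) = r then c S else 0
  have h_lift : ∑ R ∈ powersetCard k univ with #(R \ U) = r, ∑ a ∈ Rᶜ, c (insert a R)
      = ∑ R ∈ powersetCard k univ, ∑ a ∈ Rᶜ, g (insert a R) a := by
    rw [sum_filter]
    refine sum_congr rfl fun R _ => ?_
    rw [ite_sum_zero]
    exact sum_congr rfl fun a ha => by simp only [g, erase_insert (mem_compl.1 ha)]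
  have h_count : ∀ S ∈ powersetCard (k + 1) univ, ∑ a ∈ S, g S a
      = (((if #(S \ U) = r then k + 1 - r else 0)
          + (if #(S \ U) = r + 1 then r + 1 else 0) : ℕ) : A) * c S := by
    intro S hS
    rw [← card_filter_card_erase_sdiff U (mem_powersetCard_univ.1 hS) r, ← nsmul_eq_mul,
      ← sum_const, sum_filter]
  calc ((k + 1 - r : ℕ) : A) * shellSum c U (k + 1) r + (r + 1) * shellSum c U (k + 1) (r + 1)
      = ∑ S ∈ powersetCard (k + 1) univ, (((if #(S \ U) = r then k + 1 - r else 0)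
          + (if #(S \ U) = r + 1 then r + 1 else 0) : ℕ) : A) * c S := by
        rw [shellSum, shellSum, sum_filter, sum_filter, mul_sum, mul_sum, ← sum_add_distrib]
        refine sum_congr rfl fun S _ => ?_
        split_ifs <;> push_cast <;> ring
    _ = ∑ S ∈ powersetCard (k + 1) univ, ∑ a ∈ S, g S a := (sum_congr rfl h_count).symm
    _ = 0 := by
        rw [← sum_powersetCard_sum_compl_insert, ← h_lift]
        exact sum_eq_zero fun R _ => hc R

lemma shellSum_eq [IsDomain A] [CharZero A] (hc : ∀ R, ∑ a ∈ Rᶜ, c (insert a R) = 0)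
    (hU : #U = t) (r : ℕ) : shellSum c U t r = (-1) ^ r * t.choose r * c U := by
  induction r with
  | zero => simp [shellSum_zero hU]
  | succ r ih =>
    have h_rec := shellSum_recurrence hc hU r
    have h_choose : ((t - r : ℕ) : A) * t.choose r = (r + 1) * t.choose (r + 1) := by
      rw [mul_comm, mul_comm (r + 1 : A)]
      exact_mod_cast (Nat.choose_succ_right_eq t r).symm
    refine mul_left_cancel₀ (Nat.cast_add_one_ne_zero r) ?_
    linear_combination h_rec - ((t - r : ℕ) : A) * ih - (-1) ^ r * c U * h_choose

theorem sum_powersetCard_mul_card_sdiff [IsDomain A] [CharZero A]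
    (hc : ∀ R, ∑ a ∈ Rᶜ, c (insert a R) = 0) (hU : #U = t) (G : ℕ → A) :
    ∑ S ∈ powersetCard t univ, c S * G #(S \ U)
      = c U * ∑ r ∈ range (t + 1), (-1) ^ r * t.choose r * G r := by
  have h_maps : ∀ S ∈ powersetCard t univ, #(S \ U) ∈ range (t + 1) := fun S hS => by
    rw [mem_range, Nat.lt_succ_iff, ← (mem_powersetCard_univ.1 hS)]
    exact card_le_card sdiff_subset
  rw [← sum_fiberwise_of_maps_to h_maps, mul_sum]
  refine sum_congr rfl fun r _ => ?_
  rw [sum_congr rfl fun S hS => by rw [(mem_filter.1 hS).2], ← sum_mul, ← shellSum,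
    shellSum_eq hc hU]
  ring

end Shells

section Symmetrization

lemma prod_mul_prod_eq_prod_union_of_isIdempotentElem {ι M : Type*} [DecidableEq ι]
    [CommMonoid M] {f : ι → M} (hf : ∀ i, IsIdempotentElem (f i)) (S T : Finset ι) :
    (∏ i ∈ S, f i) * ∏ i ∈ T, f i = ∏ i ∈ S ∪ T, f i := by
  have h_inter : IsIdempotentElem (∏ i ∈ S ∩ T, f i) :=
    prod_induction _ _ (fun _ _ => IsIdempotentElem.mul) IsIdempotentElem.one fun i _ => hf i
  rw [← prod_union_inter, ← prod_sdiff (inter_subset_left.trans subset_union_left), mul_assoc,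
    h_inter.eq]

variable {α : Type*} [DecidableEq α]

lemma exists_perm_image_eq {U V : Finset α} (h : #U = #V) :
    ∃ τ : Equiv.Perm α, U.image τ = V := by
  have := Set.powersetCard.isPretransitive (α := α) (n := #V)
  obtain ⟨τ, hτ⟩ := MulAction.exists_smul_eq (Equiv.Perm α)
    (Set.powersetCard.ofCard h) (Set.powersetCard.ofCard rfl)
  exact ⟨τ, by simpa [Finset.smul_finset_def, Equiv.Perm.smul_def] using congr($hτ.1)⟩

variable [Fintype α] {A : Type*} [CommRing A] (x : α → A)

lemma sum_perm_prod_eq_of_card_eq {U V : Finset α} (h : #U = #V) :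
    ∑ σ : Equiv.Perm α, ∏ i ∈ U, x (σ i) = ∑ σ : Equiv.Perm α, ∏ i ∈ V, x (σ i) := by
  obtain ⟨τ, rfl⟩ := exists_perm_image_eq h
  simp_rw [prod_image fun a _ b _ hab => τ.injective hab]
  exact (Fintype.sum_equiv (Equiv.mulRight τ) _ _ fun σ => rfl).symm

variable {x}

lemma sum_compl_sum_perm_prod_insert (hx : ∀ i, IsIdempotentElem (x i)) (U : Finset α) :
    ∑ a ∈ Uᶜ, ∑ σ : Equiv.Perm α, ∏ i ∈ insert a U, x (σ i)
      = ((∑ i, x i) - #U) * ∑ σ : Equiv.Perm α, ∏ i ∈ U, x (σ i) := by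
  rw [sum_comm, mul_sum]
  refine sum_congr rfl fun σ _ => ?_
  have h_absorb : ∀ a ∈ U, x (σ a) * ∏ i ∈ U, x (σ i) = ∏ i ∈ U, x (σ i) := fun a ha => by
    simpa [insert_eq_of_mem ha] using
      prod_mul_prod_eq_prod_union_of_isIdempotentElem (fun i => hx (σ i)) {a} U
  have h_total : ∑ a ∈ Uᶜ, x (σ a) = (∑ i, x i) - ∑ a ∈ U, x (σ a) := by
    rw [eq_sub_iff_add_eq, add_comm, sum_add_sum_compl, Equiv.sum_comp σ x]
  rw [sum_congr rfl fun a ha => prod_insert (mem_compl.1 ha), ← sum_mul, h_total, sub_mul,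
    sum_mul U, sum_congr rfl h_absorb, sum_const, nsmul_eq_mul, sub_mul]

theorem sum_perm_prod_eq [IsDomain A] [CharZero A] (hx : ∀ i, IsIdempotentElem (x i))
    (U : Finset α) :
    ∑ σ : Equiv.Perm α, ∏ i ∈ U, x (σ i)
      = (Fintype.card α - #U).factorial * ∏ k ∈ range #U, ((∑ i, x i) - k) := by
  induction h : #U generalizing U with
  | zero => simp [card_eq_zero.1 h, Fintype.card_perm]
  | succ m ih =>
    obtain ⟨a, ha⟩ : U.Nonempty := card_pos.1 (by omega)
    have h_erase : #(U.erase a) = m := by rw [card_erase_of_mem ha, h]; rfl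
    have h_lt : m < Fintype.card α := h_erase ▸ card_lt_univ_of_notMem (notMem_erase a U)
    have h_rec := sum_compl_sum_perm_prod_insert hx (U.erase a)
    rw [sum_congr rfl fun b hb => sum_perm_prod_eq_of_card_eq x (V := U) (by
      rw [card_insert_of_notMem (mem_compl.1 hb), h_erase, h]), sum_const, card_compl,
      h_erase, nsmul_eq_mul, ih _ h_erase] at h_rec
    have h_fact : (Fintype.card α - m).factorial
        = (Fintype.card α - m) * (Fintype.card α - (m + 1)).factorial := by
      rw [← Nat.mul_factorial_pred (by omega)]
      congr 2
    refine mul_left_cancel₀ (Nat.cast_ne_zero.2 (Nat.sub_ne_zero_of_lt h_lt)) ?_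
    rw [h_rec, prod_range_succ, h_fact]
    push_cast
    ring

end Symmetrization

theorem sum_range_choose_mul_factorial_mul_prod {A : Type*} [CommRing A] {t N : ℕ} (h : t ≤ N)
    (y : A) :
    ∑ r ∈ range (t + 1), (t.choose r : A) * ((-1) ^ r * (N - r).factorial * ∏ i ∈ range r, (y - i))
      = (N - t).factorial * ∏ i ∈ range t, ((N : A) - y - i) := by
  induction t generalizing N y with
  | zero => simp
  | succ t ih =>
    obtain ⟨M, rfl⟩ : ∃ M, N = M + 1 := ⟨N - 1, by omega⟩
    have h_shift : ∀ r, (-1) ^ (r + 1) * ((M + 1 - (r + 1)).factorial : A)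
          * ∏ i ∈ range (r + 1), (y - i)
        = -y * ((-1) ^ r * (M - r).factorial * ∏ i ∈ range r, (y - 1 - i)) := fun r => by
      rw [prod_range_succ', Nat.add_sub_add_right]
      simp only [Nat.cast_add, Nat.cast_one, Nat.cast_zero, sub_zero, sub_add_eq_sub_sub_swap]
      ring
    have h_prod : ∏ i ∈ range t, ((M : A) - (y - 1) - i)
        = ∏ i ∈ range t, (((M + 1 : ℕ) : A) - y - i) :=
      prod_congr rfl fun i _ => by push_cast; ring
    rw [sum_choose_succ_mul (fun r _ => (-1) ^ r * ((M + 1 - r).factorial : A)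
        * ∏ i ∈ range r, (y - i)) t]
    simp only [h_shift, mul_left_comm _ (-y), ← mul_sum]
    rw [ih (by omega), ih (by omega), h_prod, prod_range_succ,
      show M + 1 - t = M - t + 1 by omega, Nat.factorial_succ, Nat.add_sub_add_right]
    push_cast [show t ≤ M by omega]
    ring

theorem sum_range_choose_mul_factorial_mul_prod_add {A : Type*} [CommRing A] {t n : ℕ}
    (h : 2 * t ≤ n) (y : A) :
    ∑ r ∈ range (t + 1),
        (t.choose r : A) * ((-1) ^ r * (n - (t + r)).factorial * ∏ i ∈ range (t + r), (y - i))
      = (n - 2 * t).factorial * ∏ i ∈ range t, ((y - i) * (n - y - i)) := by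
  have h_split : ∀ r, ∏ i ∈ range (t + r), (y - i)
      = (∏ i ∈ range t, (y - i)) * ∏ i ∈ range r, (y - t - i) := fun r => by
    rw [prod_range_add]
    push_cast
    simp only [sub_add_eq_sub_sub]
  have h_prod : ∏ i ∈ range t, (((n - t : ℕ) : A) - (y - t) - i)
      = ∏ i ∈ range t, (n - y - i) :=
    prod_congr rfl fun i _ => by push_cast [show t ≤ n by omega]; ring
  simp only [h_split, ← Nat.sub_sub, mul_left_comm _ (∏ i ∈ range t, (y - i)), ← mul_sum]
  rw [sum_range_choose_mul_factorial_mul_prod (by omega), h_prod, prod_mul_distrib,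
    show n - t - t = n - 2 * t by omega]
  ring

lemma eval_mul_eval_of_mem_homogML {n t : ℕ} {p q : MvPolynomial (Fin n) ℝ}
    (hp : p ∈ homogML n t) (hq : q ∈ homogML n t) {y : Fin n → ℝ}
    (hy : ∀ i, IsIdempotentElem (y i)) :
    eval y p * eval y q = ∑ T ∈ powersetCard t univ, ∑ S ∈ powersetCard t univ,
      coeff (indicatorExp T) q * (coeff (indicatorExp S) p * ∏ i ∈ S ∪ T, y i) := by
  rw [eval_eq_sum_of_mem_homogML hp, eval_eq_sum_of_mem_homogML hq, sum_mul_sum, sum_comm]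
  refine sum_congr rfl fun T _ => sum_congr rfl fun S _ => ?_
  rw [← prod_mul_prod_eq_prod_union_of_isIdempotentElem hy]
  ring

theorem sum_perm_eval_mul_eval {n t : ℕ} {p q : MvPolynomial (Fin n) ℝ}
    (hp : p ∈ homogML n t) (hq : q ∈ homogML n t) (hpk : Wop n p = 0) {x : Fin n → ℝ}
    (hx : ∀ i, IsIdempotentElem (x i)) :
    ∑ σ : Equiv.Perm (Fin n), eval (x ∘ σ) p * eval (x ∘ σ) q
      = (∑ S ∈ powersetCard t univ, coeff (indicatorExp S) p * coeff (indicatorExp S) q)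
        * ∑ r ∈ range (t + 1), (t.choose r : ℝ) * ((-1) ^ r * (n - (t + r)).factorial
            * ∏ i ∈ range (t + r), ((∑ l, x l) - i)) := by
  have h_sym : ∀ T ∈ powersetCard t univ, ∀ S : Finset (Fin n),
      ∑ σ : Equiv.Perm (Fin n), ∏ i ∈ S ∪ T, x (σ i)
        = (n - (t + #(S \ T))).factorial * ∏ i ∈ range (t + #(S \ T)), ((∑ l, x l) - i) := by
    intro T hT S
    rw [sum_perm_prod_eq hx, Fintype.card_fin, ← card_sdiff_add_card, mem_powersetCard_univ.1 hT,
      add_comm]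
  rw [sum_congr rfl fun σ _ => eval_mul_eval_of_mem_homogML hp hq fun i => hx (σ i), sum_comm,
    sum_mul]
  refine sum_congr rfl fun T hT => ?_
  rw [sum_comm]
  simp only [← mul_sum, Function.comp_apply, h_sym T hT]
  rw [sum_powersetCard_mul_card_sdiff (sum_compl_coeff_insert_eq_zero hp hpk)
    (mem_powersetCard_univ.1 hT)
    (fun r => (n - (t + r)).factorial * ∏ i ∈ range (t + r), ((∑ l, x l) - i))]
  simp only [mul_sum]
  exact sum_congr rfl fun r _ => by ring

open Finset in
theorem sym_product_kernel_general (n t : ℕ) (ht2 : 2 * t ≤ n)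
    (p q : MvPolynomial (Fin n) ℝ)
    (hp : p ∈ homogML n t) (hq : q ∈ homogML n t)
    (hpk : Wop n p = 0) :
    ∀ x : Fin n → ℝ, (∀ i, x i = 0 ∨ x i = 1) →
      (1 / (n.factorial : ℝ)) *
          ∑ σ : Equiv.Perm (Fin n), eval (x ∘ σ) p * eval (x ∘ σ) q
        = (∑ S ∈ Finset.powersetCard t (Finset.univ : Finset (Fin n)),
              coeff (∑ i ∈ S, Finsupp.single i 1) p *
                coeff (∑ i ∈ S, Finsupp.single i 1) q)
          * (((n - 2 * t).factorial : ℝ) / (n.factorial : ℝ))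
          * ∏ i ∈ Finset.range t,
              ((∑ l, x l) - (i : ℝ)) * ((n : ℝ) - (∑ l, x l) - (i : ℝ)) := by
  intro x hx
  have hx_idem : ∀ i, IsIdempotentElem (x i) := fun i => by
    rcases hx i with h | h <;> simp [IsIdempotentElem, h]
  rw [sum_perm_eval_mul_eval hp hq hpk hx_idem, sum_range_choose_mul_factorial_mul_prod_add ht2]
  unfold indicatorExp
  ring

/-- For `p, q ∈ Ker(W_t)` with `t ≤ n/2`, the symmetrization of `pq` on the
hypercube equals `⟨p,q⟩·((n-2t)!/n!)·Π_{i=0}^{t-1}(|x|-i)(n-|x|-i)`. -/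
theorem sym_product_kernel (n t : ℕ) (ht1 : 1 ≤ t) (ht2 : 2 * t ≤ n)
    (p q : MvPolynomial (Fin n) ℝ)
    (hp : p ∈ homogML n t) (hq : q ∈ homogML n t)
    (hpk : Wop n p = 0) (hqk : Wop n q = 0) :
    ∀ x : Fin n → ℝ, (∀ i, x i = 0 ∨ x i = 1) →
      (1 / (n.factorial : ℝ)) *
          ∑ σ : Equiv.Perm (Fin n), eval (x ∘ σ) p * eval (x ∘ σ) q
        = (∑ S ∈ Finset.powersetCard t (Finset.univ : Finset (Fin n)),
              coeff (∑ i ∈ S, Finsupp.single i 1) p *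
                coeff (∑ i ∈ S, Finsupp.single i 1) q)
          * (((n - 2 * t).factorial : ℝ) / (n.factorial : ℝ))
          * ∏ i ∈ Finset.range t,
              ((∑ l, x l) - (i : ℝ)) * ((n : ℝ) - (∑ l, x l) - (i : ℝ)) :=
  sym_product_kernel_general n t ht2 p q hp hq hpk
end
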